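/- arXiv:1811.01922 — 2 statements merged into one kernel-verified Lean document; each statement's English description precedes it below -/
import Mathlib

section
/- Let T be a compact Hausdorff space. Every unital *-homomorphism ρ : C(T, ℂ) → M₂(ℂ) can be written in the form ρ(a) = a(t₁)·p + a(t₂)·(1−p) for some points t₁, t₂ ∈ T and some projection p ∈ M₂(ℂ) with p equal to I₂ or a rank-one projection (taking p = I₂ when t₁ = t₂ is allowed). -/
/-!
The image of `ρ` is a commuting family of `2 × 2` matrices closed under adjoints. Either it
consists of scalars, or the real or imaginary part of one of its elements is a non-scalar
Hermitian matrix `H`; a multiple of `H - λ`, for an eigenvalue `λ`, is then a rank-one projection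
`p` commuting with the image. A `2 × 2` matrix `M` commuting with `p` equals
`tr (p M) • p + tr ((1 - p) M) • (1 - p)`, so `a ↦ tr (p ρ a)` and `a ↦ tr ((1 - p) ρ a)` are
characters of `C(T, ℂ)`, that is, evaluations at two points `t₁, t₂`.
-/

open Matrix

namespace Matrix

/-- The singular case of the identity `A X A = tr (A X) • A - det A • adj X` for `2 × 2`
matrices. -/
theorem mul_mul_self_eq_trace_smul_of_det_eq_zero {R : Type*} [CommRing R]
    {A : Matrix (Fin 2) (Fin 2) R} (hA : A.det = 0) (X : Matrix (Fin 2) (Fin 2) R) :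
    A * X * A = (A * X).trace • A := by
  rw [det_fin_two] at hA
  ext i j
  fin_cases i <;> fin_cases j <;> simp [mul_apply, trace_fin_two, Fin.sum_univ_two]
  · linear_combination (-X 1 1) * hA
  · linear_combination (X 0 1) * hA
  · linear_combination (X 1 0) * hA
  · linear_combination (-X 0 0) * hA

theorem det_eq_zero_of_isIdempotentElem {K n : Type*} [Field K] [Fintype n] [DecidableEq n]
    {p : Matrix n n K} (hp : IsIdempotentElem p) (hp1 : p ≠ 1) : p.det = 0 := by
  by_contra h
  exact hp1 ((IsIdempotentElem.iff_eq_one_of_isUnit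
    ((isUnit_iff_isUnit_det p).2 (isUnit_iff_ne_zero.2 h))).1 hp)

theorem rank_eq_zero_iff {K m n : Type*} [Field K] [Fintype n] [DecidableEq n]
    {A : Matrix m n K} : A.rank = 0 ↔ A = 0 := by
  rw [rank, Submodule.finrank_eq_zero, LinearMap.range_eq_bot, ← toLin'_apply',
    LinearEquiv.map_eq_zero_iff]

section FinTwo

variable {K : Type*} [Field K] {p : Matrix (Fin 2) (Fin 2) K}

theorem trace_eq_one_of_isIdempotentElem (hp : IsIdempotentElem p) (hp0 : p ≠ 0) (hp1 : p ≠ 1) :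
    p.trace = 1 := by
  have h := mul_mul_self_eq_trace_smul_of_det_eq_zero (det_eq_zero_of_isIdempotentElem hp hp1) 1
  rw [mul_one, hp.eq] at h
  have h' : (p.trace - 1) • p = 0 := by rw [sub_smul, one_smul, ← h, sub_self]
  exact sub_eq_zero.1 ((smul_eq_zero.1 h').resolve_right hp0)

theorem mul_eq_trace_smul_of_commute (hp : IsIdempotentElem p) (hp1 : p ≠ 1)
    {M : Matrix (Fin 2) (Fin 2) K} (hM : Commute p M) : p * M = (p * M).trace • p := by
  calc p * M = p * M * p := by rw [mul_assoc, ← hM.eq, ← mul_assoc, hp.eq]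
    _ = (p * M).trace • p :=
      mul_mul_self_eq_trace_smul_of_det_eq_zero (det_eq_zero_of_isIdempotentElem hp hp1) M

theorem eq_trace_smul_add_trace_smul_of_commute (hp : IsIdempotentElem p) (hp0 : p ≠ 0)
    (hp1 : p ≠ 1) {M : Matrix (Fin 2) (Fin 2) K} (hM : Commute p M) :
    M = (p * M).trace • p + ((1 - p) * M).trace • (1 - p) := by
  calc M = p * M + (1 - p) * M := by rw [sub_mul, one_mul, add_sub_cancel]
    _ = _ := by
      rw [← mul_eq_trace_smul_of_commute hp hp1 hM,
        ← mul_eq_trace_smul_of_commute hp.one_sub (mt sub_eq_self.1 hp0)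
          ((Commute.one_left M).sub_left hM)]

theorem rank_eq_one_of_isIdempotentElem (hp : IsIdempotentElem p) (hp0 : p ≠ 0) (hp1 : p ≠ 1) :
    p.rank = 1 := by
  have h := rank_add_rank_le_card_of_mul_eq_zero hp.mul_one_sub_self
  have h0 : p.rank ≠ 0 := mt rank_eq_zero_iff.1 hp0
  have h1 : (1 - p).rank ≠ 0 := mt rank_eq_zero_iff.1 (sub_ne_zero.2 hp1.symm)
  rw [Fintype.card_fin] at h
  omega

end FinTwo

open scoped ComplexOrder in
theorem exists_isHermitian_projection_commute_of_isHermitian {𝕜 : Type*} [RCLike 𝕜]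
    {H : Matrix (Fin 2) (Fin 2) 𝕜} (hH : H.IsHermitian) (hH_scalar : ∀ c : 𝕜, H ≠ c • 1) :
    ∃ p : Matrix (Fin 2) (Fin 2) 𝕜, p.IsHermitian ∧ IsIdempotentElem p ∧ p ≠ 0 ∧ p ≠ 1 ∧
      ∀ M, Commute H M → Commute p M := by
  set K := H - (hH.eigenvalues 0 : 𝕜) • 1
  have hK_det : K.det = 0 := by
    have h := spectrum.mem_iff.1 (hH.eigenvalues_mem_spectrum_real 0)
    rw [Algebra.algebraMap_eq_smul_one, ← neg_sub, IsUnit.neg_iff, isUnit_iff_isUnit_det,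
      isUnit_iff_ne_zero, not_not, RCLike.real_smul_eq_coe_smul (K := 𝕜)] at h
    exact h
  have hK_herm : K.IsHermitian := hH.sub (isHermitian_one.smul (RCLike.conj_ofReal _))
  have hK0 : K ≠ 0 := fun h => hH_scalar _ (sub_eq_zero.1 h)
  have hKK : K * K = K.trace • K := by
    simpa using mul_mul_self_eq_trace_smul_of_det_eq_zero hK_det 1
  have htr : K.trace ≠ 0 := fun h => hK0 <| trace_mul_conjTranspose_self_eq_zero_iff.1 <| by
    rw [hK_herm.eq, hKK, h, zero_smul, trace_zero]
  have htr_star : star K.trace = K.trace := by rw [← trace_conjTranspose, hK_herm.eq]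
  refine ⟨K.trace⁻¹ • K, ?_, ?_, smul_ne_zero (inv_ne_zero htr) hK0, fun h => ?_,
    fun M hM => ((hM.sub_left ((Commute.one_left M).smul_left _)).smul_left _)⟩
  · rw [IsHermitian, conjTranspose_smul, hK_herm.eq, star_inv₀, htr_star]
  · rw [IsIdempotentElem, smul_mul_smul_comm, hKK, smul_smul, mul_assoc, inv_mul_cancel₀ htr,
      mul_one]
  · have := congrArg det h
    rw [det_smul, hK_det, mul_zero, det_one] at this
    exact zero_ne_one this

open ComplexStarModule in
theorem exists_isHermitian_projection_commute {S : Set (Matrix (Fin 2) (Fin 2) ℂ)}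
    (hS_star : ∀ M ∈ S, Mᴴ ∈ S) (hS_comm : ∀ M ∈ S, ∀ N ∈ S, Commute M N) :
    ∃ p : Matrix (Fin 2) (Fin 2) ℂ, p.IsHermitian ∧ IsIdempotentElem p ∧ p ≠ 0 ∧ p ≠ 1 ∧
      ∀ M ∈ S, Commute p M := by
  by_cases hS_scalar : ∀ N ∈ S, ∃ c : ℂ, N = c • 1
  · refine ⟨single 0 0 1, ?_, ?_, ?_, ?_, fun M hM => ?_⟩
    · ext i j; fin_cases i <;> fin_cases j <;> simp
    · simp [IsIdempotentElem]
    · exact fun h => by simpa using congrFun (congrFun h 0) 0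
    · exact fun h => by simpa using congrFun (congrFun h 1) 1
    · obtain ⟨c, rfl⟩ := hS_scalar M hM
      exact (Commute.one_right _).smul_right c
  push Not at hS_scalar
  obtain ⟨N, hN, hN_scalar⟩ := hS_scalar
  have hN_comm : ∀ M ∈ S, Commute N M ∧ Commute (star N) M := fun M hM =>
    ⟨hS_comm N hN M hM, hS_comm _ (hS_star N hN) M hM⟩
  obtain ⟨H, hH, hH_scalar, hH_comm⟩ : ∃ H : Matrix (Fin 2) (Fin 2) ℂ, H.IsHermitian ∧
      (∀ c : ℂ, H ≠ c • 1) ∧ ∀ M ∈ S, Commute H M := by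
    have h_parts : ∀ M ∈ S, Commute (ℜ N : Matrix (Fin 2) (Fin 2) ℂ) M ∧
        Commute (ℑ N : Matrix (Fin 2) (Fin 2) ℂ) M := fun M hM => by
      obtain ⟨h₁, h₂⟩ := hN_comm M hM
      rw [realPart_apply_coe, imaginaryPart_apply_coe]
      exact ⟨(h₁.add_left h₂).smul_left _, ((h₁.sub_left h₂).smul_left _).smul_left _⟩
    have h_nonscalar : (∀ c : ℂ, (ℜ N : Matrix (Fin 2) (Fin 2) ℂ) ≠ c • 1) ∨
        ∀ c : ℂ, (ℑ N : Matrix (Fin 2) (Fin 2) ℂ) ≠ c • 1 := by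
      by_contra! ⟨⟨a, ha⟩, ⟨b, hb⟩⟩
      refine hN_scalar (a + Complex.I * b) ?_
      rw [← realPart_add_I_smul_imaginaryPart N, ha, hb, smul_smul, ← add_smul]
    rcases h_nonscalar with h | h
    · exact ⟨_, (ℜ N).2.isHermitian, h, fun M hM => (h_parts M hM).1⟩
    · exact ⟨_, (ℑ N).2.isHermitian, h, fun M hM => (h_parts M hM).2⟩
  obtain ⟨p, hp_herm, hp, hp0, hp1, hp_comm⟩ :=
    exists_isHermitian_projection_commute_of_isHermitian hH hH_scalar
  exact ⟨p, hp_herm, hp, hp0, hp1, fun M hM => hp_comm M (hH_comm M hM)⟩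

/-- Multiplicative because `q * ρ x = tr (q * ρ x) • q` for the rank-one idempotent `q`. -/
noncomputable def compressionAlgHom {K A : Type*} [Field K] [Semiring A] [Algebra K A]
    (ρ : A →ₐ[K] Matrix (Fin 2) (Fin 2) K) {q : Matrix (Fin 2) (Fin 2) K}
    (hq : IsIdempotentElem q) (hq0 : q ≠ 0) (hq1 : q ≠ 1) (hρq : ∀ x, Commute q (ρ x)) :
    A →ₐ[K] K :=
  AlgHom.ofLinearMap (traceLinearMap (Fin 2) K K ∘ₗ LinearMap.mulLeft K q ∘ₗ ρ.toLinearMap)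
    (by simpa using trace_eq_one_of_isIdempotentElem hq hq0 hq1)
    (fun x y => by
      simp only [LinearMap.comp_apply, AlgHom.toLinearMap_apply, LinearMap.mulLeft_apply,
        traceLinearMap_apply, map_mul]
      rw [← mul_assoc]
      conv_lhs => rw [mul_eq_trace_smul_of_commute hq hq1 (hρq x), smul_mul_assoc, trace_smul,
        smul_eq_mul])

@[simp]
theorem compressionAlgHom_apply {K A : Type*} [Field K] [Semiring A] [Algebra K A]
    (ρ : A →ₐ[K] Matrix (Fin 2) (Fin 2) K) {q : Matrix (Fin 2) (Fin 2) K}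
    (hq : IsIdempotentElem q) (hq0 : q ≠ 0) (hq1 : q ≠ 1) (hρq : ∀ x, Commute q (ρ x)) (x : A) :
    compressionAlgHom ρ hq hq0 hq1 hρq x = (q * ρ x).trace :=
  rfl

end Matrix

theorem ContinuousMap.exists_algHom_eq_eval {T 𝕜 : Type*} [TopologicalSpace T] [CompactSpace T]
    [T2Space T] [RCLike 𝕜] (φ : C(T, 𝕜) →ₐ[𝕜] 𝕜) : ∃ t : T, ∀ a : C(T, 𝕜), φ a = a t := by
  obtain ⟨t, ht⟩ := (WeakDual.CharacterSpace.continuousMapEval_bijective T 𝕜).2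
    (WeakDual.CharacterSpace.equivAlgHom.symm φ)
  exact ⟨t, fun a => (DFunLike.congr_fun ht a).symm⟩

theorem stmt_11 (T : Type*) [TopologicalSpace T] [CompactSpace T] [T2Space T]
    (ρ : C(T, ℂ) →⋆ₐ[ℂ] Matrix (Fin 2) (Fin 2) ℂ) :
    ∃ (t₁ t₂ : T) (p : Matrix (Fin 2) (Fin 2) ℂ),
      pᴴ = p ∧ p * p = p ∧ (p = 1 ∨ p.rank = 1) ∧
      ∀ a : C(T, ℂ), ρ a = a t₁ • p + a t₂ • (1 - p) := by
  obtain ⟨p, hp_herm, hp, hp0, hp1, hp_comm⟩ := exists_isHermitian_projection_commute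
    (S := Set.range ρ) (by rintro _ ⟨x, rfl⟩; exact ⟨star x, map_star ρ x⟩)
    (by rintro _ ⟨x, rfl⟩ _ ⟨y, rfl⟩; exact (Commute.all x y).map ρ)
  have hρp : ∀ x, Commute p (ρ x) := fun x => hp_comm _ ⟨x, rfl⟩
  have hρq : ∀ x, Commute (1 - p) (ρ x) := fun x => (Commute.one_left _).sub_left (hρp x)
  obtain ⟨t₁, ht₁⟩ := ContinuousMap.exists_algHom_eq_eval
    (compressionAlgHom ρ.toAlgHom hp hp0 hp1 hρp)
  obtain ⟨t₂, ht₂⟩ := ContinuousMap.exists_algHom_eq_eval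
    (compressionAlgHom ρ.toAlgHom hp.one_sub (sub_ne_zero.2 hp1.symm) (mt sub_eq_self.1 hp0) hρq)
  refine ⟨t₁, t₂, p, hp_herm.eq, hp.eq, Or.inr (rank_eq_one_of_isIdempotentElem hp hp0 hp1),
    fun a => ?_⟩
  rw [← ht₁, ← ht₂, compressionAlgHom_apply, compressionAlgHom_apply]
  exact eq_trace_smul_add_trace_smul_of_commute hp hp0 hp1 (hρp a)
end

section
/- Let T be a compact Hausdorff space with basepoint t₀, and let X be a topological space with basepoint x₀. Suppose q : S² × T × T → X is a continuous map with q(1,0,t₀,t₀) = x₀ such that q(x, t₁, t₂) = q(−x, t₂, t₁) for all x ∈ S², t₁, t₂ ∈ T, and such that q(x, t, t) is independent of x for each t ∈ T. Then for every loop φ in T based at t₀, the loops τ ↦ q((1,0), φ(τ), t₀) and τ ↦ q((1,0), t₀, φ(τ)) are homotopic rel endpoints in X. -/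
/-- The 2-sphere, realized inside `ℂ × ℝ`. -/
abbrev Sph2 : Type := {p : ℂ × ℝ // ‖p.1‖ ^ 2 + p.2 ^ 2 = 1}

/-- The antipodal map on the sphere. -/
def Sph2.neg (x : Sph2) : Sph2 :=
  ⟨-x.1, by simpa [neg_sq] using x.2⟩

/-- The point `(1, 0)` of the sphere. -/
def Sph2.pt : Sph2 := ⟨((1 : ℂ), (0 : ℝ)), by norm_num⟩

/-!
Moving the first coordinate of `q` along a half great circle `σ` from `(1,0)` to `(-1,0)` gives
the homotopy `(s, τ) ↦ q (σ s, φ τ, t₀)`. At `s = 1` it is `q (-(1,0), φ τ, t₀) = q ((1,0), t₀, φ τ)`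
by the symmetry of `q`, and it fixes the endpoints because `q (σ s, t₀, t₀)` does not depend on `s`.
-/

section

variable {X Y T : Type*} [TopologicalSpace X] [TopologicalSpace Y] [TopologicalSpace T]

theorem ContinuousMap.HomotopicRel.map_path {f₀ f₁ : C(T, X)} {S : Set T}
    (h : f₀.HomotopicRel f₁ S) {a b : T} (γ : Path a b) (ha : a ∈ S) (hb : b ∈ S) :
    (γ.map f₀.continuous).Homotopic
      ((γ.map f₁.continuous).cast (h.fst_eq_snd ha) (h.fst_eq_snd hb)) := by
  obtain ⟨F⟩ := h
  refine ⟨{ toHomotopy := F.toHomotopy.compContinuousMap γ.toContinuousMap, prop' := ?_ }⟩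
  rintro t x (rfl | rfl)
  · exact F.eq_fst t (by simpa using ha)
  · exact F.eq_fst t (by simpa using hb)

theorem ContinuousMap.homotopicRel_curry_of_path (G : C(Y × T, X)) {y₀ y₁ : Y} (γ : Path y₀ y₁)
    {t₀ : T} (hG : ∀ s, G (γ s, t₀) = G (y₀, t₀)) :
    (G.curry y₀).HomotopicRel (G.curry y₁) {t₀} := by
  refine ⟨{ toFun := fun p ↦ G (γ p.1, p.2)
            map_zero_left := fun _ ↦ by simp
            map_one_left := fun _ ↦ by simp
            prop' := ?_ }⟩
  rintro s t rfl
  simpa using hG s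

end

noncomputable def Sph2.halfEquator : Path Sph2.pt Sph2.pt.neg where
  toFun s := ⟨(Complex.exp (Real.pi * s * Complex.I), 0), by simp [Complex.norm_exp]⟩
  continuous_toFun := by fun_prop
  source' := by simp [Sph2.pt]
  target' := by simp [Sph2.pt, Sph2.neg, Complex.exp_pi_mul_I]

theorem stmt_12_general (T X : Type*) [TopologicalSpace T]
    [TopologicalSpace X] (t₀ : T)
    (q : Sph2 × T × T → X) (hq : Continuous q)
    (hsym : ∀ (x : Sph2) (t₁ t₂ : T), q (x, t₁, t₂) = q (x.neg, t₂, t₁))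
    (hdiag : ∀ (x y : Sph2) (t : T), q (x, t, t) = q (y, t, t))
    (φ : Path t₀ t₀) :
    Path.Homotopic
      (φ.map (show Continuous fun t => q (Sph2.pt, t, t₀) from
        hq.comp (continuous_const.prodMk (continuous_id.prodMk continuous_const))))
      (φ.map (show Continuous fun t => q (Sph2.pt, t₀, t) from
        hq.comp (continuous_const.prodMk (continuous_const.prodMk continuous_id)))) := by
  let G : C(Sph2 × T, X) := ⟨fun p ↦ q (p.1, p.2, t₀), by fun_prop⟩
  have hrel := G.homotopicRel_curry_of_path Sph2.halfEquator fun s ↦ hdiag _ _ t₀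
  have hflip : G.curry Sph2.pt.neg = ⟨fun t ↦ q (Sph2.pt, t₀, t), by fun_prop⟩ := by
    ext t
    exact (hsym Sph2.pt t₀ t).symm
  rw [hflip] at hrel
  exact hrel.map_path φ rfl rfl

theorem stmt_12 (T X : Type*) [TopologicalSpace T] [CompactSpace T] [T2Space T]
    [TopologicalSpace X] (t₀ : T) (x₀ : X)
    (q : Sph2 × T × T → X) (hq : Continuous q)
    (hbase : q (Sph2.pt, t₀, t₀) = x₀)
    (hsym : ∀ (x : Sph2) (t₁ t₂ : T), q (x, t₁, t₂) = q (x.neg, t₂, t₁))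
    (hdiag : ∀ (x y : Sph2) (t : T), q (x, t, t) = q (y, t, t))
    (φ : Path t₀ t₀) :
    Path.Homotopic
      (φ.map (show Continuous fun t => q (Sph2.pt, t, t₀) from
        hq.comp (continuous_const.prodMk (continuous_id.prodMk continuous_const))))
      (φ.map (show Continuous fun t => q (Sph2.pt, t₀, t) from
        hq.comp (continuous_const.prodMk (continuous_const.prodMk continuous_id)))) :=
  stmt_12_general T X t₀ q hq hsym hdiag φ
end
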